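/- Let F be a field, let k and n be integers with 1 ≤ k ≤ n, and let V be an F-vector space with dim_F V = k+1. Let q be an integer with q ≥ 2n−k+2 and let x_1, …, x_q be nonzero vectors of V satisfying: (i) for every subset S ⊆ {1,…,q} with #S ≤ n+1, the F-span of {x_j : j ∈ S} has dimension at least #S − (n−k); and (ii) for every subset S ⊆ {1,…,q} with #S ≥ n+1, the family {x_j : j ∈ S} spans V over F. Then there exist an integer l ≥ 1 and pairwise disjoint nonempty subsets I_1, …, I_l of {1,…,q} such that: (a) the family {x_j}_{j∈I_1} is linearly dependent over F, while every proper subfamily of it is linearly independent over F; (b) for each t with 2 ≤ t ≤ l, the family {x_j}_{j∈I_t} is linearly independent over F; (c) for each t with 2 ≤ t ≤ l, there exist nonzero scalars c_j ∈ F (j ∈ I_t) such that Σ_{j∈I_t} c_j x_j lies in the F-span of {x_j : j ∈ I_1 ∪ ⋯ ∪ I_{t−1}}; and (d) n+1 ≤ #(I_1 ∪ ⋯ ∪ I_l) ≤ min{2n−k+2, n+k+1}. -/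

import Mathlib

open Module Submodule

private lemma exists_min_card {α : Type*} {P : Finset α → Prop} (h : ∃ T, P T) :
    ∃ T, P T ∧ ∀ T', P T' → T.card ≤ T'.card := by
  classical
  obtain ⟨T0, hT0⟩ := h
  have hm : ∃ m, ∃ T, P T ∧ T.card = m := ⟨T0.card, T0, hT0, rfl⟩
  obtain ⟨T, hT, hc⟩ := Nat.find_spec hm
  exact ⟨T, hT, fun T' hT' => by rw [hc]; exact Nat.find_min' hm ⟨T', hT', rfl⟩⟩

section Helpers

variable {F : Type*} [Field F] {V : Type*} [AddCommGroup V] [Module F V]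

private lemma image_coe_eq_range {α : Type*} (x : α → V) (T : Finset α) :
    x '' ↑T = Set.range (fun j : {j // j ∈ T} => x j.1) := by
  ext y
  simp [Set.mem_image, Set.mem_range, Subtype.exists]

private lemma exists_coeffs {α : Type*} [DecidableEq α] (x : α → V) (T : Finset α) {v : V}
    (hv : v ∈ span F (x '' ↑T)) :
    ∃ c : α → F, (∀ j, j ∉ T → c j = 0) ∧ ∑ j ∈ T, c j • x j = v := by
  rw [image_coe_eq_range] at hv
  obtain ⟨c', hc'⟩ := (mem_span_range_iff_exists_fun F).mp hv
  refine ⟨fun j => if h : j ∈ T then c' ⟨j, h⟩ else 0, fun j hj => dif_neg hj, ?_⟩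
  rw [← Finset.sum_coe_sort T (fun j => (if h : j ∈ T then c' ⟨j, h⟩ else 0) • x j), ← hc']
  exact Finset.sum_congr rfl fun i _ => by rw [dif_pos i.2]

private lemma sum_mem_span {α : Type*} (x : α → V) (T : Finset α) (c : α → F) :
    ∑ j ∈ T, c j • x j ∈ span F (x '' ↑T) :=
  Submodule.sum_smul_mem _ c fun j hj => subset_span (Set.mem_image_of_mem x (Finset.mem_coe.mpr hj))

private lemma span_erase {α : Type*} [DecidableEq α] (x : α → V) {T : Finset α} {j0 : α}
    (hj0 : j0 ∈ T) (h : x j0 ∈ span F (x '' ↑(T.erase j0))) :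
    span F (x '' ↑T) = span F (x '' ↑(T.erase j0)) := by
  conv_lhs => rw [← Finset.insert_erase hj0]
  rw [Finset.coe_insert, Set.image_insert_eq, Submodule.span_insert_eq_span h]

private lemma exists_erase_of_dep {α : Type*} [DecidableEq α] (x : α → V) {T : Finset α}
    (h : ¬ LinearIndependent F (fun j : {j // j ∈ T} => x j.1)) :
    ∃ j0 ∈ T, x j0 ∈ span F (x '' ↑(T.erase j0)) := by
  obtain ⟨g, hg, i0, hi0⟩ := Fintype.not_linearIndependent_iff.mp h
  refine ⟨i0.1, i0.2, ?_⟩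
  have hmem : ∑ i ∈ Finset.univ.erase i0, g i • x i.1 ∈ span F (x '' ↑(T.erase i0.1)) := by
    refine Submodule.sum_smul_mem _ _ fun i hi => subset_span ?_
    exact ⟨i.1, Finset.mem_coe.mpr (Finset.mem_erase.mpr
      ⟨fun hh => (Finset.mem_erase.mp hi).1 (Subtype.ext hh), i.2⟩), rfl⟩
  have hsplit := Finset.add_sum_erase Finset.univ (fun i => g i • x i.1) (Finset.mem_univ i0)
  have heq : g i0 • x i0.1 = -∑ i ∈ Finset.univ.erase i0, g i • x i.1 :=
    eq_neg_of_add_eq_zero_left (hsplit.trans hg)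
  have hx0 : x i0.1 = (g i0)⁻¹ • (g i0 • x i0.1) := by rw [inv_smul_smul₀ hi0]
  rw [hx0, heq]
  exact Submodule.smul_mem _ _ (Submodule.neg_mem _ hmem)

private lemma indep_card_le {α : Type*} [FiniteDimensional F V] (x : α → V) {T : Finset α}
    (h : LinearIndependent F (fun j : {j // j ∈ T} => x j.1)) :
    T.card ≤ Module.finrank F V := by
  simpa [Fintype.card_coe] using h.fintype_card_le_finrank

end Helpers

private lemma aux_extend {F : Type*} [Field F] {V : Type*} [AddCommGroup V] [Module F V]
    [FiniteDimensional F V] {k n : ℕ} (hk1 : 1 ≤ k) (hkn : k ≤ n)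
    (hdim : Module.finrank F V = k + 1) {q : ℕ} (hq : 2 * n - k + 2 ≤ q)
    {x : Fin q → V} (hx : ∀ j, x j ≠ 0)
    (hi : ∀ S : Finset (Fin q), S.card ≤ n + 1 →
      S.card - (n - k) ≤ Module.finrank F (Submodule.span F (x '' ↑S))) :
    ∀ m l (I : ℕ → Finset (Fin q)), 1 ≤ l →
      (∀ t < l, (I t).Nonempty) →
      (∀ s < l, ∀ t < l, s ≠ t → Disjoint (I s) (I t)) →
      (¬ LinearIndependent F (fun j : {j // j ∈ I 0} => x j.1) ∧
        ∀ S : Finset (Fin q), S ⊂ I 0 →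
          LinearIndependent F (fun j : {j // j ∈ S} => x j.1)) →
      (∀ t, 1 ≤ t → t < l →
        LinearIndependent F (fun j : {j // j ∈ I t} => x j.1)) →
      (∀ t, 1 ≤ t → t < l → ∃ c : Fin q → F, (∀ j ∈ I t, c j ≠ 0) ∧
        (∑ j ∈ I t, c j • x j) ∈
          Submodule.span F (x '' {j | ∃ s < t, j ∈ I s})) →
      n + 1 - ((Finset.range l).biUnion I).card ≤ m →
      (((Finset.range l).biUnion I).card ≤ n ∨
        (n + 1 ≤ ((Finset.range l).biUnion I).card ∧
          ((Finset.range l).biUnion I).card ≤ min (2 * n - k + 2) (n + k + 1))) →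
      ∃ l' : ℕ, 1 ≤ l' ∧ ∃ I' : ℕ → Finset (Fin q),
        (∀ t < l', (I' t).Nonempty) ∧
        (∀ s < l', ∀ t < l', s ≠ t → Disjoint (I' s) (I' t)) ∧
        (¬ LinearIndependent F (fun j : {j // j ∈ I' 0} => x j.1) ∧
          ∀ S : Finset (Fin q), S ⊂ I' 0 →
            LinearIndependent F (fun j : {j // j ∈ S} => x j.1)) ∧
        (∀ t, 1 ≤ t → t < l' →
          LinearIndependent F (fun j : {j // j ∈ I' t} => x j.1)) ∧
        (∀ t, 1 ≤ t → t < l' → ∃ c : Fin q → F, (∀ j ∈ I' t, c j ≠ 0) ∧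
          (∑ j ∈ I' t, c j • x j) ∈
            Submodule.span F (x '' {j | ∃ s < t, j ∈ I' s})) ∧
        (n + 1 ≤ ((Finset.range l').biUnion I').card ∧
          ((Finset.range l').biUnion I').card ≤ min (2 * n - k + 2) (n + k + 1)) := by
  intro m
  induction m with
  | zero =>
    intro l I hl hne hdisj ha hb hc hmeas hinv
    rcases hinv with h | h
    · exact absurd hmeas (by omega)
    · exact ⟨l, hl, I, hne, hdisj, ha, hb, hc, h⟩
  | succ m ih =>
    intro l I hl hne hdisj ha hb hc hmeas hinv
    rcases hinv with hUn | h
    · -- extend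
      classical
      set U := (Finset.range l).biUnion I with hUdef
      have hUne : U.Nonempty := by
        obtain ⟨j0, hj0⟩ := hne 0 hl
        exact ⟨j0, Finset.mem_biUnion.mpr ⟨0, Finset.mem_range.mpr hl, hj0⟩⟩
      set d := Module.finrank F (span F (x '' (↑U : Set (Fin q)))) with hd
      have hd1 : 1 ≤ d := by
        by_contra hcon
        push_neg at hcon
        have hbot : span F (x '' (↑U : Set (Fin q))) = ⊥ :=
          Submodule.finrank_eq_zero.mp (by omega)
        obtain ⟨j, hj⟩ := hUne
        have hxj : x j ∈ span F (x '' (↑U : Set (Fin q))) :=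
          subset_span (Set.mem_image_of_mem x (Finset.mem_coe.mpr hj))
        rw [hbot, Submodule.mem_bot] at hxj
        exact hx j hxj
      have hdk : d ≤ k + 1 := hdim ▸ Submodule.finrank_le _
      have hUd : U.card ≤ d + (n - k) := by
        have := hi U (by omega)
        omega
      have hcompl : Uᶜ.card = q - U.card := by
        rw [Finset.card_compl, Fintype.card_fin]
      have hsize : n + 2 - d ≤ Uᶜ.card := by omega
      obtain ⟨S, hSsub, hScard⟩ := Finset.exists_subset_card_eq hsize
      have hScard1 : S.card ≤ n + 1 := by omega
      have hSdim := hi S hScard1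
      have hsup : Module.finrank F
          ↥(span F (x '' (↑S : Set (Fin q))) ⊔ span F (x '' (↑U : Set (Fin q)))) ≤ k + 1 :=
        hdim ▸ Submodule.finrank_le _
      have hsum := Submodule.finrank_sup_add_finrank_inf_eq
        (span F (x '' (↑S : Set (Fin q)))) (span F (x '' (↑U : Set (Fin q))))
      have hinf : 0 < Module.finrank F
          ↥(span F (x '' (↑S : Set (Fin q))) ⊓ span F (x '' (↑U : Set (Fin q)))) := by omega
      have hnt : Nontrivial
          ↥(span F (x '' (↑S : Set (Fin q))) ⊓ span F (x '' (↑U : Set (Fin q)))) :=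
        Module.finrank_pos_iff.mp hinf
      obtain ⟨w, hw⟩ := exists_ne
        (0 : ↥(span F (x '' (↑S : Set (Fin q))) ⊓ span F (x '' (↑U : Set (Fin q)))))
      have hPS : S ⊆ Uᶜ ∧ ∃ v : V, v ≠ 0 ∧ v ∈ span F (x '' (↑S : Set (Fin q))) ∧
          v ∈ span F (x '' (↑U : Set (Fin q))) :=
        ⟨hSsub, w.1, fun h => hw (Subtype.ext h),
          (Submodule.mem_inf.mp w.2).1, (Submodule.mem_inf.mp w.2).2⟩
      obtain ⟨T, ⟨hTsub, v, hv0, hvT, hvU⟩, hTmin⟩ := exists_min_card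
        (P := fun T : Finset (Fin q) => T ⊆ Uᶜ ∧ ∃ v : V, v ≠ 0 ∧
          v ∈ span F (x '' (↑T : Set (Fin q))) ∧ v ∈ span F (x '' (↑U : Set (Fin q))))
        ⟨S, hPS⟩
      have hTS : T.card ≤ n + 2 - d := by
        have := hTmin S hPS
        omega
      have hkey : ∀ j0 ∈ T, ∀ wv : V, wv ∈ span F (x '' (↑(T.erase j0) : Set (Fin q))) →
          wv ∈ span F (x '' (↑U : Set (Fin q))) → wv = 0 := by
        intro j0 hj0 wv h1 h2
        by_contra hne0
        have hmin := hTmin (T.erase j0)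
          ⟨(Finset.erase_subset _ _).trans hTsub, wv, hne0, h1, h2⟩
        have hlt := Finset.card_erase_lt_of_mem hj0
        omega
      have hTne : T.Nonempty := by
        rcases Finset.eq_empty_or_nonempty T with rfl | hh
        · exfalso
          apply hv0
          have himg : x '' (↑(∅ : Finset (Fin q)) : Set (Fin q)) = ∅ := by simp
          rw [himg, Submodule.span_empty, Submodule.mem_bot] at hvT
          exact hvT
        · exact hh
      have hTindep : LinearIndependent F (fun j : {j // j ∈ T} => x j.1) := by
        by_contra hdep
        obtain ⟨j0, hj0, hj0span⟩ := exists_erase_of_dep x hdep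
        have hspan := span_erase x hj0 hj0span
        exact hv0 (hkey j0 hj0 v (hspan ▸ hvT) hvU)
      have hTk : T.card ≤ k + 1 := by
        have := indep_card_le x hTindep
        omega
      obtain ⟨c, hcsupp, hcsum⟩ := exists_coeffs x T hvT
      have hcne : ∀ j ∈ T, c j ≠ 0 := by
        intro j0 hj0 hc0
        have hveq : v = ∑ j ∈ T.erase j0, c j • x j := by
          rw [← hcsum, ← Finset.add_sum_erase T (fun j => c j • x j) hj0, hc0, zero_smul,
            zero_add]
        exact hv0 (hkey j0 hj0 v (hveq ▸ sum_mem_span x (T.erase j0) c) hvU)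
      have hTU : Disjoint U T := by
        rw [Finset.disjoint_right]
        intro j hjT hjU
        exact (Finset.mem_compl.mp (hTsub hjT)) hjU
      set J : ℕ → Finset (Fin q) := fun t => if t = l then T else I t with hJ
      have hJlt : ∀ t < l, J t = I t := fun t ht => if_neg (Nat.ne_of_lt ht)
      have hJl : J l = T := if_pos rfl
      have hU' : (Finset.range (l + 1)).biUnion J = U ∪ T := by
        ext j
        simp only [Finset.mem_biUnion, Finset.mem_range, Finset.mem_union]
        constructor
        · rintro ⟨s, hs, hj⟩
          rcases Nat.lt_succ_iff_lt_or_eq.mp hs with h | rfl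
          · exact Or.inl (Finset.mem_biUnion.mpr ⟨s, Finset.mem_range.mpr h, (hJlt s h) ▸ hj⟩)
          · exact Or.inr (hJl ▸ hj)
        · rintro (hj | hj)
          · obtain ⟨s, hs, hj⟩ := Finset.mem_biUnion.mp hj
            have hs' := Finset.mem_range.mp hs
            exact ⟨s, Nat.lt_succ_of_lt hs', (hJlt s hs').symm ▸ hj⟩
          · exact ⟨l, Nat.lt_succ_self l, hJl.symm ▸ hj⟩
      have hcard' : ((Finset.range (l + 1)).biUnion J).card = U.card + T.card := by
        rw [hU', Finset.card_union_of_disjoint hTU]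
      have hset : {j : Fin q | ∃ s < l, j ∈ J s} = (↑U : Set (Fin q)) := by
        ext j
        simp only [Set.mem_setOf_eq, Finset.mem_coe]
        constructor
        · rintro ⟨s, hs, hj⟩
          exact Finset.mem_biUnion.mpr ⟨s, Finset.mem_range.mpr hs, (hJlt s hs) ▸ hj⟩
        · intro hj
          obtain ⟨s, hs, hj⟩ := Finset.mem_biUnion.mp hj
          have hs' := Finset.mem_range.mp hs
          exact ⟨s, hs', (hJlt s hs').symm ▸ hj⟩
      have hne' : ∀ t < l + 1, (J t).Nonempty := by
        intro t ht
        rcases Nat.lt_succ_iff_lt_or_eq.mp ht with h | rfl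
        · rw [hJlt t h]; exact hne t h
        · rw [hJl]; exact hTne
      have hdisj' : ∀ s < l + 1, ∀ t < l + 1, s ≠ t → Disjoint (J s) (J t) := by
        intro s hs t ht hst
        rcases Nat.lt_succ_iff_lt_or_eq.mp hs with hs' | rfl <;>
          rcases Nat.lt_succ_iff_lt_or_eq.mp ht with ht' | rfl
        · rw [hJlt s hs', hJlt t ht']; exact hdisj s hs' t ht' hst
        · rw [hJlt s hs', hJl]
          exact hTU.mono_left (Finset.subset_biUnion_of_mem I (Finset.mem_range.mpr hs'))
        · rw [hJl, hJlt t ht']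
          exact (hTU.mono_left (Finset.subset_biUnion_of_mem I (Finset.mem_range.mpr ht'))).symm
        · exact absurd rfl hst
      have ha' : ¬ LinearIndependent F (fun j : {j // j ∈ J 0} => x j.1) ∧
          ∀ S : Finset (Fin q), S ⊂ J 0 →
            LinearIndependent F (fun j : {j // j ∈ S} => x j.1) := by
        rw [hJlt 0 hl]; exact ha
      have hb' : ∀ t, 1 ≤ t → t < l + 1 →
          LinearIndependent F (fun j : {j // j ∈ J t} => x j.1) := by
        intro t h1 ht
        rcases Nat.lt_succ_iff_lt_or_eq.mp ht with h | rfl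
        · rw [hJlt t h]; exact hb t h1 h
        · rw [hJl]; exact hTindep
      have hc' : ∀ t, 1 ≤ t → t < l + 1 → ∃ c0 : Fin q → F, (∀ j ∈ J t, c0 j ≠ 0) ∧
          (∑ j ∈ J t, c0 j • x j) ∈
            Submodule.span F (x '' {j | ∃ s < t, j ∈ J s}) := by
        intro t h1 ht
        rcases Nat.lt_succ_iff_lt_or_eq.mp ht with h | rfl
        · obtain ⟨c0, hc01, hc02⟩ := hc t h1 h
          have hsetq : {j : Fin q | ∃ s < t, j ∈ J s} = {j : Fin q | ∃ s < t, j ∈ I s} := by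
            ext j
            constructor
            · rintro ⟨s, hs, hj⟩
              exact ⟨s, hs, (hJlt s (hs.trans h)) ▸ hj⟩
            · rintro ⟨s, hs, hj⟩
              exact ⟨s, hs, (hJlt s (hs.trans h)).symm ▸ hj⟩
          rw [hJlt t h, hsetq]
          exact ⟨c0, hc01, hc02⟩
        · refine ⟨c, ?_, ?_⟩
          · intro j hj
            rw [hJl] at hj
            exact hcne j hj
          · rw [hJl, hset, hcsum]
            exact hvU
      have hmeas' : n + 1 - ((Finset.range (l + 1)).biUnion J).card ≤ m := by
        have hT1 : 1 ≤ T.card := Finset.card_pos.mpr hTne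
        omega
      have hinv' : ((Finset.range (l + 1)).biUnion J).card ≤ n ∨
          (n + 1 ≤ ((Finset.range (l + 1)).biUnion J).card ∧
            ((Finset.range (l + 1)).biUnion J).card ≤ min (2 * n - k + 2) (n + k + 1)) := by
        by_cases hc2 : ((Finset.range (l + 1)).biUnion J).card ≤ n
        · exact Or.inl hc2
        · exact Or.inr ⟨by omega, by omega⟩
      exact ih (l + 1) J (by omega) hne' hdisj' ha' hb' hc' hmeas' hinv'
    · exact ⟨l, hl, I, hne, hdisj, ha, hb, hc, h⟩

theorem stmt_5 (F : Type*) [Field F] (V : Type*) [AddCommGroup V] [Module F V]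
    [FiniteDimensional F V]
    (k n : ℕ) (hk1 : 1 ≤ k) (hkn : k ≤ n) (hdim : Module.finrank F V = k + 1)
    (q : ℕ) (hq : 2 * n - k + 2 ≤ q) (x : Fin q → V) (hx : ∀ j, x j ≠ 0)
    (hi : ∀ S : Finset (Fin q), S.card ≤ n + 1 →
      S.card - (n - k) ≤ Module.finrank F (Submodule.span F (x '' ↑S)))
    (hii : ∀ S : Finset (Fin q), n + 1 ≤ S.card →
      Submodule.span F (x '' ↑S) = ⊤) :
    ∃ l : ℕ, 1 ≤ l ∧ ∃ I : ℕ → Finset (Fin q),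
      (∀ t < l, (I t).Nonempty) ∧
      (∀ s < l, ∀ t < l, s ≠ t → Disjoint (I s) (I t)) ∧
      -- (a) : the family {x_j}_{j ∈ I_1} is minimal over F
      (¬ LinearIndependent F (fun j : {j // j ∈ I 0} => x j.1) ∧
        ∀ S : Finset (Fin q), S ⊂ I 0 →
          LinearIndependent F (fun j : {j // j ∈ S} => x j.1)) ∧
      -- (b) : {x_j}_{j ∈ I_t} is linearly independent over F for 2 ≤ t ≤ l
      (∀ t, 1 ≤ t → t < l →
        LinearIndependent F (fun j : {j // j ∈ I t} => x j.1)) ∧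
      -- (c) : a combination with nonzero coefficients falls in the previous span
      (∀ t, 1 ≤ t → t < l → ∃ c : Fin q → F, (∀ j ∈ I t, c j ≠ 0) ∧
        (∑ j ∈ I t, c j • x j) ∈
          Submodule.span F (x '' {j | ∃ s < t, j ∈ I s})) ∧
      -- (d) : size of the union
      (n + 1 ≤ ((Finset.range l).biUnion I).card ∧
        ((Finset.range l).biUnion I).card ≤ min (2 * n - k + 2) (n + k + 1)) := by
  classical
  have hq2 : k + 2 ≤ q := by omega
  obtain ⟨S0, hS0sub, hS0card⟩ := Finset.exists_subset_card_eq
    (show k + 2 ≤ (Finset.univ : Finset (Fin q)).card by simpa using hq2)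
  have hS0dep : ¬ LinearIndependent F (fun j : {j // j ∈ S0} => x j.1) := by
    intro h
    have := indep_card_le x h
    rw [hdim] at this
    omega
  obtain ⟨T0, hT0dep, hT0min⟩ := exists_min_card
    (P := fun T : Finset (Fin q) => ¬ LinearIndependent F (fun j : {j // j ∈ T} => x j.1))
    ⟨S0, hS0dep⟩
  have hT0card : T0.card ≤ k + 2 := by
    have := hT0min S0 hS0dep
    omega
  have hT0ne : T0.Nonempty := by
    rcases Finset.eq_empty_or_nonempty T0 with rfl | h
    · exfalso
      apply hT0dep
      have : IsEmpty {j // j ∈ (∅ : Finset (Fin q))} := ⟨fun j => Finset.notMem_empty j.1 j.2⟩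
      exact linearIndependent_empty_type
    · exact h
  have hamin : ∀ S : Finset (Fin q), S ⊂ T0 →
      LinearIndependent F (fun j : {j // j ∈ S} => x j.1) := by
    intro S hS
    by_contra hdep
    have h1 := hT0min S hdep
    have h2 := Finset.card_lt_card hS
    omega
  have hU0 : (Finset.range 1).biUnion (fun _ : ℕ => T0) = T0 := by simp
  exact aux_extend hk1 hkn hdim hq hx hi (n + 1) 1 (fun _ => T0) le_rfl
    (fun t _ => hT0ne)
    (fun s hs t ht hst => absurd (by omega : s = t) hst)
    ⟨hT0dep, hamin⟩
    (fun t h1 h2 => absurd h2 (by omega))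
    (fun t h1 h2 => absurd h2 (by omega))
    (by rw [hU0]; exact Nat.sub_le _ _)
    (by
      rw [hU0]
      by_cases h : T0.card ≤ n
      · exact Or.inl h
      · exact Or.inr ⟨by omega, by omega⟩)
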